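/- Let H be a symmetric matrix in ℚ^{n×n}, let Q ∈ ℚ^{n×n} be symmetric positive definite, let h, c ∈ ℚⁿ, and let p ∈ {0,…,n}. Suppose the feasible region F := E(c, Q) ∩ (ℤᵖ × ℝ^{n−p}) is nonempty. Then for every ε ∈ (0, 1] there exists a point x⋄ ∈ F with rational coordinates such that f(x⋄) − min{f(x) : x ∈ F} ≤ ε·(max{f(x) : x ∈ F} − min{f(x) : x ∈ F}). -/

import Mathlib

open Matrix

/-- The set `ℤᵖ × ℝ^{n−p}` of points of `ℝⁿ` whose first `p` coordinates are integers. -/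
def mixedIntSet (n p : ℕ) : Set (Fin n → ℝ) :=
  {x | ∀ i : Fin n, (i : ℕ) < p → ∃ z : ℤ, x i = (z : ℝ)}

/-- The objective function `f(x) = xᵀHx + hᵀx`. -/
noncomputable def qf {n : ℕ} (H : Matrix (Fin n) (Fin n) ℝ) (h : Fin n → ℝ)
    (x : Fin n → ℝ) : ℝ :=
  x ⬝ᵥ H.mulVec x + h ⬝ᵥ x

/- ### Auxiliary lemmas -/

lemma contDot {n : ℕ} (A : Matrix (Fin n) (Fin n) ℝ) (c : Fin n → ℝ) :
    Continuous fun x : Fin n → ℝ => (x - c) ⬝ᵥ A.mulVec (x - c) := by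
  simp only [dotProduct, mulVec]
  fun_prop

lemma contQf {n : ℕ} (A : Matrix (Fin n) (Fin n) ℝ) (h : Fin n → ℝ) :
    Continuous (qf A h) := by
  unfold qf
  simp only [dotProduct, mulVec]
  fun_prop

lemma contDot0 {n : ℕ} (A : Matrix (Fin n) (Fin n) ℝ) :
    Continuous fun x : Fin n → ℝ => x ⬝ᵥ A.mulVec x := by
  simp only [dotProduct, mulVec]
  fun_prop

lemma isClosed_mixedIntSet (n p : ℕ) : IsClosed (mixedIntSet n p) := by
  have : mixedIntSet n p =
      ⋂ i ∈ {i : Fin n | (i : ℕ) < p},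
        (fun x : Fin n → ℝ => x i) ⁻¹' (Set.range ((↑) : ℤ → ℝ)) := by
    ext x
    simp [mixedIntSet, Set.mem_iInter, eq_comm]
  rw [this]
  exact isClosed_biInter fun i _ =>
    (Int.isClosedEmbedding_coe_real.isClosed_range).preimage (continuous_apply i)

lemma dotSmul {n : ℕ} (A : Matrix (Fin n) (Fin n) ℝ) (s : ℝ) (v : Fin n → ℝ) :
    (s • v) ⬝ᵥ A.mulVec (s • v) = s ^ 2 * (v ⬝ᵥ A.mulVec v) := by
  rw [mulVec_smul, dotProduct_smul, smul_dotProduct]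
  simp only [smul_eq_mul]; ring

lemma posdef_pos {n : ℕ} {A : Matrix (Fin n) (Fin n) ℝ} (hA : A.PosDef)
    {v : Fin n → ℝ} (hv : v ≠ 0) : 0 < v ⬝ᵥ A.mulVec v := by
  simpa using hA.dotProduct_mulVec_pos hv

lemma posdef_coercive {n : ℕ} (A : Matrix (Fin n) (Fin n) ℝ) (hA : A.PosDef) :
    ∃ α > 0, ∀ v : Fin n → ℝ, α * ‖v‖ ^ 2 ≤ v ⬝ᵥ A.mulVec v := by
  rcases Nat.eq_zero_or_pos n with hn | hn
  · refine ⟨1, one_pos, fun v => ?_⟩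
    subst hn
    have hv : v = 0 := Subsingleton.elim _ _
    have h0 : v ⬝ᵥ A.mulVec v = 0 := by simp [hv]
    rw [hv] at h0 ⊢
    rw [h0, norm_zero]
    norm_num
  · have hsc : IsCompact (Metric.sphere (0 : Fin n → ℝ) 1) := isCompact_sphere _ _
    have hsne : (Metric.sphere (0 : Fin n → ℝ) 1).Nonempty := by
      have : Nontrivial (Fin n → ℝ) := by
        refine ⟨0, Pi.single ⟨0, hn⟩ 1, fun hcon => ?_⟩
        have := congrFun hcon ⟨0, hn⟩
        simp at this
      exact NormedSpace.sphere_nonempty.2 zero_le_one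
    obtain ⟨u0, hu0, hmin⟩ := hsc.exists_isMinOn hsne (contDot0 A).continuousOn
    have hu0ne : u0 ≠ 0 := by
      intro hcon
      rw [Metric.mem_sphere, hcon] at hu0
      simp at hu0
    refine ⟨u0 ⬝ᵥ A.mulVec u0, posdef_pos hA hu0ne, fun v => ?_⟩
    rcases eq_or_ne v 0 with rfl | hv
    · simp
    · have hnv : 0 < ‖v‖ := norm_pos_iff.2 hv
      have hu : (‖v‖⁻¹ • v) ∈ Metric.sphere (0 : Fin n → ℝ) 1 := by
        simp [norm_smul, inv_mul_cancel₀ hnv.ne']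
      have h1 : u0 ⬝ᵥ A.mulVec u0 ≤ (‖v‖⁻¹) ^ 2 * (v ⬝ᵥ A.mulVec v) :=
        (dotSmul A _ v) ▸ hmin hu
      have h4 := mul_le_mul_of_nonneg_right h1 (sq_nonneg ‖v‖)
      calc u0 ⬝ᵥ A.mulVec u0 * ‖v‖ ^ 2 ≤ (‖v‖⁻¹) ^ 2 * (v ⬝ᵥ A.mulVec v) * ‖v‖ ^ 2 := h4
        _ = v ⬝ᵥ A.mulVec v := by field_simp

lemma expandDot {n : ℕ} (A : Matrix (Fin n) (Fin n) ℝ) (u v : Fin n → ℝ) (s t : ℝ) :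
    (s • u + t • v) ⬝ᵥ A.mulVec (s • u + t • v) =
      s ^ 2 * (u ⬝ᵥ A.mulVec u) + s * t * (u ⬝ᵥ A.mulVec v) + s * t * (v ⬝ᵥ A.mulVec u)
        + t ^ 2 * (v ⬝ᵥ A.mulVec v) := by
  simp only [mulVec_add, mulVec_smul, dotProduct_add, add_dotProduct, dotProduct_smul,
    smul_dotProduct, smul_eq_mul]
  ring

lemma symmDot {n : ℕ} {A : Matrix (Fin n) (Fin n) ℝ} (hA : Aᵀ = A) (u v : Fin n → ℝ) :
    u ⬝ᵥ A.mulVec v = v ⬝ᵥ A.mulVec u := by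
  rw [dotProduct_mulVec, dotProduct_comm]
  congr 1
  rw [← hA, vecMul_transpose, hA]

lemma subDot {n : ℕ} (A : Matrix (Fin n) (Fin n) ℝ) (u v : Fin n → ℝ) :
    (u - v) ⬝ᵥ A.mulVec (u - v) =
      u ⬝ᵥ A.mulVec u - u ⬝ᵥ A.mulVec v - v ⬝ᵥ A.mulVec u + v ⬝ᵥ A.mulVec v := by
  simp only [mulVec_sub, dotProduct_sub, sub_dotProduct]
  ring

lemma segment_lt {n : ℕ} {A : Matrix (Fin n) (Fin n) ℝ} (hsym : Aᵀ = A)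
    (hpos : ∀ v : Fin n → ℝ, 0 ≤ v ⬝ᵥ A.mulVec v) {u v : Fin n → ℝ}
    (hu : u ⬝ᵥ A.mulVec u ≤ 1) (hv : v ⬝ᵥ A.mulVec v < 1) {t : ℝ}
    (ht0 : 0 < t) (ht1 : t ≤ 1) :
    ((1 - t) • u + t • v) ⬝ᵥ A.mulVec ((1 - t) • u + t • v) < 1 := by
  have hexp := expandDot A u v (1 - t) t
  have hb : u ⬝ᵥ A.mulVec v = v ⬝ᵥ A.mulVec u := symmDot hsym u v
  have hsub := hpos (u - v)
  rw [subDot] at hsub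
  nlinarith [mul_nonneg (mul_nonneg ht0.le (sub_nonneg.2 ht1)) hsub,
    mul_pos ht0 (sub_pos.2 hv), mul_le_mul_of_nonneg_left hu (sub_nonneg.2 ht1)]

lemma rat_perturb {n p : ℕ} (Q' : Matrix (Fin n) (Fin n) ℝ) (c' : Fin n → ℝ)
    (y : Fin n → ℝ) (hy : (y - c') ⬝ᵥ Q'.mulVec (y - c') < 1)
    (hyk : y ∈ mixedIntSet n p) (δ : ℝ) (hδ : 0 < δ) :
    ∃ y' : Fin n → ℝ, (∀ i, ∃ q : ℚ, y' i = (q : ℝ)) ∧ y' ∈ mixedIntSet n p ∧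
      (y' - c') ⬝ᵥ Q'.mulVec (y' - c') < 1 ∧ dist y' y < δ := by
  have hopen : IsOpen {x : Fin n → ℝ | (x - c') ⬝ᵥ Q'.mulVec (x - c') < 1} :=
    isOpen_lt (contDot Q' c') continuous_const
  obtain ⟨η, hη, hball⟩ := Metric.isOpen_iff.1 hopen y hy
  set η' := min η δ with hη'
  have hη'0 : 0 < η' := lt_min hη hδ
  have hchoice : ∀ i : Fin n, ∃ q : ℚ, |y i - (q : ℝ)| < η' / 2 :=
    fun i => exists_rat_near (y i) (half_pos hη'0)
  choose qv hqv using hchoice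
  set y' : Fin n → ℝ := fun i => if (i : ℕ) < p then y i else (qv i : ℝ) with hy'
  have hd : dist y' y < η' := by
    rw [dist_pi_lt_iff hη'0]
    intro i
    by_cases hi : (i : ℕ) < p
    · simp [hy', hi, hη'0]
    · simp only [hy', hi, if_false]
      rw [Real.dist_eq, abs_sub_comm]
      exact lt_of_lt_of_le (hqv i) (by linarith)
  refine ⟨y', ?_, ?_, ?_, ?_⟩
  · intro i
    by_cases hi : (i : ℕ) < p
    · obtain ⟨z, hz⟩ := hyk i hi
      exact ⟨(z : ℚ), by simp [hy', hi, hz]⟩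
    · exact ⟨qv i, by simp [hy', hi]⟩
  · intro i hi
    obtain ⟨z, hz⟩ := hyk i hi
    exact ⟨z, by simp [hy', hi, hz]⟩
  · exact hball (Metric.mem_ball.2 (lt_of_lt_of_le hd (min_le_left _ _)))
  · exact lt_of_lt_of_le hd (min_le_right _ _)

lemma rational_tangent {n p : ℕ} (Q : Matrix (Fin n) (Fin n) ℚ)
    (hQ : (Q.map ((↑) : ℚ → ℝ)).PosDef) (c : Fin n → ℚ) (x : Fin n → ℝ)
    (hgrad : ∀ i : Fin n, ¬((i : ℕ) < p) →
      ((Q.map ((↑) : ℚ → ℝ)).mulVec (x - fun i => (c i : ℝ))) i = 0)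
    (hint : ∀ i : Fin n, (i : ℕ) < p → ∃ z : ℤ, x i = (z : ℝ)) :
    ∀ i, ∃ q : ℚ, x i = (q : ℝ) := by
  classical
  choose z hz using hint
  set M : Matrix (Fin n) (Fin n) ℚ :=
    Matrix.of (fun i j => if (i : ℕ) < p then (if j = i then 1 else 0) else Q i j) with hM
  set b : Fin n → ℚ :=
    (fun i => if hi : (i : ℕ) < p then ((z i hi : ℤ) : ℚ) else (Q.mulVec c) i) with hb
  have hcast : ⇑(Rat.castHom ℝ) = ((↑) : ℚ → ℝ) := Rat.coe_castHom
  have hrowlow : ∀ i : Fin n, (i : ℕ) < p →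
      (fun j => ((M i j : ℚ) : ℝ)) = Pi.single i (1 : ℝ) := by
    intro i hi
    funext j
    simp [hM, hi, Pi.single_apply, apply_ite ((↑) : ℚ → ℝ)]
  have hMx : (M.map ((↑) : ℚ → ℝ)).mulVec x = fun i => ((b i : ℚ) : ℝ) := by
    funext i
    by_cases hi : (i : ℕ) < p
    · show (fun j => ((M i j : ℚ) : ℝ)) ⬝ᵥ x = _
      rw [hrowlow i hi, single_dotProduct, one_mul, hb]
      simp only [hi, dif_pos]
      rw [hz i hi]
      push_cast
      rfl
    · show (fun j => ((M i j : ℚ) : ℝ)) ⬝ᵥ x = _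
      have hrow : (fun j => ((M i j : ℚ) : ℝ)) = fun j => ((Q i j : ℚ) : ℝ) := by
        funext j; simp [hM, hi]
      rw [hrow]
      have h1 : (fun j => ((Q i j : ℚ) : ℝ)) ⬝ᵥ x = ((Q.map ((↑) : ℚ → ℝ)).mulVec x) i := rfl
      have h2 := hgrad i hi
      rw [mulVec_sub, Pi.sub_apply] at h2
      have h3 := sub_eq_zero.mp h2
      rw [h1, h3, hb]
      simp only [hi, dif_neg, not_false_iff]
      have h4 := RingHom.map_mulVec (Rat.castHom ℝ) Q c i
      rw [hcast] at h4
      exact h4.symm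
  have hinj : ∀ v : Fin n → ℝ, (M.map ((↑) : ℚ → ℝ)).mulVec v = 0 → v = 0 := by
    intro v hv
    have hlow : ∀ i : Fin n, (i : ℕ) < p → v i = 0 := by
      intro i hi
      have := congrFun hv i
      rw [show ((M.map ((↑) : ℚ → ℝ)).mulVec v) i = (fun j => ((M i j : ℚ) : ℝ)) ⬝ᵥ v from rfl,
        hrowlow i hi, single_dotProduct, one_mul] at this
      simpa using this
    have hhigh : ∀ i : Fin n, ¬((i : ℕ) < p) → ((Q.map ((↑) : ℚ → ℝ)).mulVec v) i = 0 := by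
      intro i hi
      have := congrFun hv i
      rw [show ((M.map ((↑) : ℚ → ℝ)).mulVec v) i = (fun j => ((M i j : ℚ) : ℝ)) ⬝ᵥ v from rfl]
        at this
      have hrow : (fun j => ((M i j : ℚ) : ℝ)) = fun j => ((Q i j : ℚ) : ℝ) := by
        funext j; simp [hM, hi]
      rw [hrow] at this
      exact this
    have hzero : v ⬝ᵥ (Q.map ((↑) : ℚ → ℝ)).mulVec v = 0 := by
      apply Finset.sum_eq_zero
      intro i _
      by_cases hi : (i : ℕ) < p
      · rw [hlow i hi, zero_mul]
      · rw [hhigh i hi, mul_zero]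
    by_contra hvne
    exact absurd hzero (ne_of_gt (posdef_pos hQ hvne))
  have hdetR : (M.map ((↑) : ℚ → ℝ)).det ≠ 0 := by
    intro hdet
    obtain ⟨v, hvne, hv0⟩ := exists_mulVec_eq_zero_iff.2 hdet
    exact hvne (hinj v hv0)
  have hdetQ : M.det ≠ 0 := by
    intro hdet
    apply hdetR
    have := RingHom.map_det (Rat.castHom ℝ) M
    rw [RingHom.mapMatrix_apply, hcast] at this
    rw [← this, hdet]
    simp
  set y : Fin n → ℚ := (M⁻¹).mulVec b with hy
  have hMy : M.mulVec y = b := by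
    rw [hy, mulVec_mulVec, Matrix.mul_nonsing_inv _ (isUnit_iff_ne_zero.2 hdetQ), one_mulVec]
  have hcast2 : (M.map ((↑) : ℚ → ℝ)).mulVec (fun i => ((y i : ℚ) : ℝ)) =
      fun i => ((b i : ℚ) : ℝ) := by
    funext i
    have h4 := RingHom.map_mulVec (Rat.castHom ℝ) M y i
    rw [hcast] at h4
    rw [show ((↑) ∘ y : Fin n → ℝ) = fun i => ((y i : ℚ) : ℝ) from rfl] at h4
    rw [← h4, hMy]
  have hsub : (M.map ((↑) : ℚ → ℝ)).mulVec (x - fun i => ((y i : ℚ) : ℝ)) = 0 := by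
    rw [mulVec_sub, hMx, hcast2, sub_self]
  have hxy : x = fun i => ((y i : ℚ) : ℝ) := by
    have := hinj _ hsub
    rwa [sub_eq_zero] at this
  intro i
  exact ⟨y i, by rw [hxy]⟩

lemma grad_zero {n : ℕ} {A : Matrix (Fin n) (Fin n) ℝ} (hsym : Aᵀ = A) (hA : A.PosDef)
    {u : Fin n → ℝ} (i : Fin n)
    (hkey : ∀ t : ℝ, u ⬝ᵥ A.mulVec u ≤
      (u + t • (Pi.single i 1 : Fin n → ℝ)) ⬝ᵥ
        A.mulVec (u + t • (Pi.single i 1 : Fin n → ℝ))) :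
    (A.mulVec u) i = 0 := by
  set e : Fin n → ℝ := Pi.single i 1 with he
  have hene : e ≠ 0 := by
    intro hcon
    have := congrFun hcon i
    simp [he] at this
  have hd : 0 < e ⬝ᵥ A.mulVec e := posdef_pos hA hene
  set a : ℝ := e ⬝ᵥ A.mulVec u with ha
  set d : ℝ := e ⬝ᵥ A.mulVec e with hdd
  have hsymm : u ⬝ᵥ A.mulVec e = a := symmDot hsym u e
  have hq : ∀ t : ℝ, 0 ≤ 2 * t * a + t ^ 2 * d := by
    intro t
    have hE := expandDot A u e 1 t
    rw [one_smul] at hE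
    have h := hkey t
    rw [hE, hsymm] at h
    nlinarith [h]
  have ha0 : a = 0 := by
    have h1 := hq (-a / d)
    have h2 : (2 : ℝ) * (-a / d) * a + (-a / d) ^ 2 * d = -(a ^ 2) / d := by
      field_simp
      ring
    rw [h2] at h1
    have h3 : 0 ≤ -a ^ 2 := by
      have := mul_nonneg h1 hd.le
      rwa [div_mul_cancel₀ _ hd.ne'] at this
    have h4 : a ^ 2 = 0 := le_antisymm (by linarith) (sq_nonneg a)
    exact sq_eq_zero_iff.1 h4
  have : a = 1 * (A.mulVec u) i := by rw [ha, he, single_dotProduct]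
  rw [one_mul] at this
  rw [← this, ha0]

/-- **Approximation for E-MIQP.** Suppose the feasible region
`F = E(c,Q) ∩ (ℤᵖ × ℝ^{n−p})` is nonempty. Then for every `ε ∈ (0,1]` there is a
point `x⋄ ∈ F` with rational coordinates such that
`f(x⋄) − min{f(x) : x ∈ F} ≤ ε·(max{f(x) : x ∈ F} − min{f(x) : x ∈ F})`. -/
theorem stmt_16 (n p : ℕ) (hp : p ≤ n)
    (H : Matrix (Fin n) (Fin n) ℚ) (hH : H.IsSymm)
    (Q : Matrix (Fin n) (Fin n) ℚ) (hQ : (Q.map ((↑) : ℚ → ℝ)).PosDef)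
    (h c : Fin n → ℚ)
    (hF : ({x : Fin n → ℝ |
        (x - fun i => (c i : ℝ)) ⬝ᵥ
          (Q.map ((↑) : ℚ → ℝ)).mulVec (x - fun i => (c i : ℝ)) ≤ 1} ∩
      mixedIntSet n p).Nonempty) :
    ∀ ε : ℝ, 0 < ε → ε ≤ 1 →
      ∃ x ∈ {x : Fin n → ℝ |
            (x - fun i => (c i : ℝ)) ⬝ᵥ
              (Q.map ((↑) : ℚ → ℝ)).mulVec (x - fun i => (c i : ℝ)) ≤ 1} ∩
          mixedIntSet n p,
        (∀ i, ∃ q : ℚ, x i = (q : ℝ)) ∧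
        qf (H.map ((↑) : ℚ → ℝ)) (fun i => (h i : ℝ)) x -
            sInf (qf (H.map ((↑) : ℚ → ℝ)) (fun i => (h i : ℝ)) ''
              ({x : Fin n → ℝ |
                  (x - fun i => (c i : ℝ)) ⬝ᵥ
                    (Q.map ((↑) : ℚ → ℝ)).mulVec (x - fun i => (c i : ℝ)) ≤ 1} ∩
                mixedIntSet n p)) ≤
          ε *
            (sSup (qf (H.map ((↑) : ℚ → ℝ)) (fun i => (h i : ℝ)) ''
                ({x : Fin n → ℝ |
                    (x - fun i => (c i : ℝ)) ⬝ᵥ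
                      (Q.map ((↑) : ℚ → ℝ)).mulVec (x - fun i => (c i : ℝ)) ≤ 1} ∩
                  mixedIntSet n p)) -
              sInf (qf (H.map ((↑) : ℚ → ℝ)) (fun i => (h i : ℝ)) ''
                ({x : Fin n → ℝ |
                    (x - fun i => (c i : ℝ)) ⬝ᵥ
                      (Q.map ((↑) : ℚ → ℝ)).mulVec (x - fun i => (c i : ℝ)) ≤ 1} ∩
                  mixedIntSet n p))) := by
  intro ε hε0 hε1
  classical
  set Q' : Matrix (Fin n) (Fin n) ℝ := Q.map ((↑) : ℚ → ℝ) with hQ'def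
  set c' : Fin n → ℝ := fun i => (c i : ℝ) with hc'def
  set f : (Fin n → ℝ) → ℝ := qf (H.map ((↑) : ℚ → ℝ)) (fun i => (h i : ℝ)) with hfdef
  set E : Set (Fin n → ℝ) := {x | (x - c') ⬝ᵥ Q'.mulVec (x - c') ≤ 1} with hEdef
  set F : Set (Fin n → ℝ) := E ∩ mixedIntSet n p with hFdef
  set K : Set ℝ := f '' F with hKdef
  -- basic topology
  have hqcont : Continuous fun x : Fin n → ℝ => (x - c') ⬝ᵥ Q'.mulVec (x - c') := contDot Q' c'
  have hfcont : Continuous f := contQf _ _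
  have hEclosed : IsClosed E := isClosed_le hqcont continuous_const
  have hFclosed : IsClosed F := hEclosed.inter (isClosed_mixedIntSet n p)
  obtain ⟨α, hα, hcoer⟩ := posdef_coercive Q' hQ
  have hFbdd : Bornology.IsBounded F := by
    apply (Metric.isBounded_closedBall (x := c') (r := Real.sqrt (1 / α))).subset
    intro x hx
    have hx1 : (x - c') ⬝ᵥ Q'.mulVec (x - c') ≤ 1 := hx.1
    have h2 : α * ‖x - c'‖ ^ 2 ≤ 1 := le_trans (hcoer (x - c')) hx1
    have h3 : ‖x - c'‖ ^ 2 ≤ 1 / α := by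
      rw [le_div_iff₀ hα]; nlinarith
    have h4 : ‖x - c'‖ ≤ Real.sqrt (1 / α) := by
      have := Real.sqrt_le_sqrt h3
      rwa [Real.sqrt_sq (norm_nonneg _)] at this
    rw [Metric.mem_closedBall, dist_eq_norm]
    exact h4
  have hFcompact : IsCompact F := Metric.isCompact_of_isClosed_isBounded hFclosed hFbdd
  have hKcompact : IsCompact K := hFcompact.image hfcont
  have hKne : K.Nonempty := hF.image f
  obtain ⟨xs, hxsF, hfxs⟩ := hKcompact.sInf_mem hKne
  have hlb : ∀ y ∈ F, sInf K ≤ f y := fun y hy => csInf_le hKcompact.bddBelow ⟨y, hy, rfl⟩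
  have hub : ∀ y ∈ F, f y ≤ sSup K := fun y hy => le_csSup hKcompact.bddAbove ⟨y, hy, rfl⟩
  have hmM : sInf K ≤ sSup K := by
    rw [← hfxs]; exact hub xs hxsF
  have hsym : Q'ᵀ = Q' := by
    have := hQ.1
    ext i j
    have h5 := congrFun (congrFun this i) j
    simpa using h5
  by_cases hcase : ∃ w : Fin n → ℝ,
      (∀ i : Fin n, (i : ℕ) < p → w i = xs i) ∧ (w - c') ⬝ᵥ Q'.mulVec (w - c') < 1
  · -- there is a point of the slice in the open ellipsoid
    obtain ⟨w, hwcoord, hwlt⟩ := hcase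
    have hkey : ∀ δ : ℝ, 0 < δ → ∃ y ∈ F, (∀ i, ∃ q : ℚ, y i = (q : ℝ)) ∧ dist y xs < δ := by
      intro δ hδ
      set t : ℝ := min (1 / 2) (δ / (2 * (dist w xs + 1))) with ht
      have hdist0 : (0 : ℝ) ≤ dist w xs := dist_nonneg
      have ht0 : 0 < t := lt_min (by norm_num) (div_pos hδ (by linarith))
      have ht1 : t ≤ 1 := le_trans (min_le_left _ _) (by norm_num)
      set yt : Fin n → ℝ := (1 - t) • xs + t • w with hyt
      have hytsub : yt - c' = (1 - t) • (xs - c') + t • (w - c') := by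
        rw [hyt]; module
      have hytlt : (yt - c') ⬝ᵥ Q'.mulVec (yt - c') < 1 := by
        rw [hytsub]
        exact segment_lt hsym (fun v => by simpa using hQ.posSemidef.dotProduct_mulVec_nonneg v) hxsF.1 hwlt ht0 ht1
      have hytmem : yt ∈ mixedIntSet n p := by
        intro i hi
        obtain ⟨z, hz⟩ := hxsF.2 i hi
        refine ⟨z, ?_⟩
        have : yt i = (1 - t) * xs i + t * w i := rfl
        rw [this, hwcoord i hi, hz]; ring
      have hytdist : dist yt xs < δ / 2 := by
        have hsub2 : yt - xs = t • (w - xs) := by rw [hyt]; module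
        rw [dist_eq_norm, hsub2, norm_smul, Real.norm_eq_abs, abs_of_pos ht0, ← dist_eq_norm]
        have htle : t ≤ δ / (2 * (dist w xs + 1)) := min_le_right _ _
        have h6 : t * dist w xs ≤ δ / (2 * (dist w xs + 1)) * dist w xs :=
          mul_le_mul_of_nonneg_right htle hdist0
        have h7 : δ / (2 * (dist w xs + 1)) * dist w xs < δ / 2 := by
          rw [div_mul_eq_mul_div, div_lt_div_iff₀ (by linarith) (by norm_num)]
          nlinarith
        linarith
      obtain ⟨y', hy'rat, hy'mem, hy'lt, hy'dist⟩ :=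
        rat_perturb Q' c' yt hytlt hytmem (δ / 2) (by linarith)
      refine ⟨y', ⟨le_of_lt hy'lt, hy'mem⟩, hy'rat, ?_⟩
      calc dist y' xs ≤ dist y' yt + dist yt xs := dist_triangle _ _ _
        _ < δ / 2 + δ / 2 := by linarith
        _ = δ := by ring
    rcases eq_or_lt_of_le hmM with heq | hlt
    · obtain ⟨y, hyF, hyrat, _⟩ := hkey 1 one_pos
      refine ⟨y, hyF, hyrat, ?_⟩
      have h8 := hub y hyF
      rw [← heq] at h8 ⊢
      have : ε * (sInf K - sInf K) = 0 := by ring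
      rw [this]
      linarith
    · have hpos : 0 < ε * (sSup K - sInf K) := mul_pos hε0 (by linarith)
      obtain ⟨δ, hδ0, hδimp⟩ := Metric.continuousAt_iff.1 hfcont.continuousAt _ hpos
      obtain ⟨y, hyF, hyrat, hydist⟩ := hkey δ hδ0
      refine ⟨y, hyF, hyrat, ?_⟩
      have h9 := hδimp hydist
      rw [Real.dist_eq] at h9
      have h10 : f y - f xs ≤ |f y - f xs| := le_abs_self _
      rw [hfxs] at h9 h10
      linarith
  · -- the slice touches the ellipsoid only at `xs`, which is then rational
    push_neg at hcase
    have hxs1 : (xs - c') ⬝ᵥ Q'.mulVec (xs - c') = 1 :=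
      le_antisymm hxsF.1 (hcase xs (fun _ _ => rfl))
    have hgrad : ∀ i : Fin n, ¬((i : ℕ) < p) → (Q'.mulVec (xs - c')) i = 0 := by
      intro i hi
      apply grad_zero hsym hQ i
      intro t
      have hcoords : ∀ j : Fin n, (j : ℕ) < p →
          (xs + t • (Pi.single i 1 : Fin n → ℝ)) j = xs j := by
        intro j hj
        have hji : j ≠ i := by
          intro hcon
          exact hi (hcon ▸ hj)
        have : (Pi.single i 1 : Fin n → ℝ) j = 0 := by
          rw [Pi.single_apply, if_neg hji]
        simp [this]
      have h11 := hcase (xs + t • (Pi.single i 1 : Fin n → ℝ)) hcoords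
      have hshift : (xs + t • (Pi.single i 1 : Fin n → ℝ)) - c' =
          (xs - c') + t • (Pi.single i 1 : Fin n → ℝ) := by
        module
      rw [hshift] at h11
      rw [hxs1]
      exact h11
    have hrat : ∀ i, ∃ q : ℚ, xs i = (q : ℝ) :=
      rational_tangent Q hQ c xs hgrad hxsF.2
    refine ⟨xs, hxsF, hrat, ?_⟩
    rw [hfxs]
    have h12 : ε * (sSup K - sInf K) ≥ 0 := mul_nonneg hε0.le (by linarith)
    linarith
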